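/- Let Q = (f_1,…,f_d) be an ideal generated by a regular sequence in a commutative Noetherian local ring R, let a be an ideal, and let L = Q :_R a. If aL ⊆ aQ and L² ⊆ Q, then L² = QL. -/

import Mathlib

noncomputable section

open RingTheory.Sequence

universe u v

variable (R : Type u) [CommRing R]

/-- The length of an `R`-module, defined as the Krull dimension of its lattice of submodules
(equivalently, the supremum of lengths of chains of submodules), truncated to `ℕ`. -/
noncomputable def mLength (M : Type v) [AddCommGroup M] [Module R M] : ℕ :=
  WithTop.untopD 0 (WithBot.unbotD 0 (Order.krullDim (Submodule R M)))

/-- The depth of an `R`-module `M` with respect to an ideal `I` : the supremum of lengths of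
regular sequences on `M` consisting of elements of `I`. -/
noncomputable def iDepth (I : Ideal R) (M : Type v) [AddCommGroup M] [Module R M] : ℕ∞ :=
  sSup {n : ℕ∞ | ∃ rs : List R, (∀ r ∈ rs, r ∈ I) ∧ IsRegular M rs ∧ (rs.length : ℕ∞) = n}

/-- A Cohen–Macaulay local ring: a Noetherian local ring whose depth equals its Krull
dimension. -/
def IsCMLocalRing : Prop :=
  IsLocalRing R ∧ IsNoetherianRing R ∧
    ∀ m : Ideal R, m.IsMaximal → (iDepth R m R : WithBot ℕ∞) = ringKrullDim R

/-- The dimension of a module `M` is `s`, i.e. `dim R/ann M = s`. -/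
def moduleDimIs (M : Type v) [AddCommGroup M] [Module R M] (s : ℕ) : Prop :=
  ringKrullDim (R ⧸ Module.annihilator R M) = (s : WithBot ℕ∞)

/-- A (nonzero finitely generated) Cohen–Macaulay module over a local ring:
depth M = dim M. -/
def IsCMModule (M : Type v) [AddCommGroup M] [Module R M] : Prop :=
  Module.Finite R M ∧
    ∀ m : Ideal R, m.IsMaximal →
      (iDepth R m M : WithBot ℕ∞) = ringKrullDim (R ⧸ Module.annihilator R M)

/-- The Ext module `Ext_R^i(N, M)`. -/
noncomputable def extMod (i : ℕ) (N M : Type u) [AddCommGroup N] [Module R N]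
    [AddCommGroup M] [Module R M] : ModuleCat.{u} R :=
  ((Ext R (ModuleCat.{u} R) i).obj (Opposite.op (ModuleCat.of R N))).obj (ModuleCat.of R M)

/-- `M` is a canonical module of the `d`-dimensional Cohen--Macaulay local ring `R` :
`M` is finitely generated and its Bass numbers `μ^i = dim_k Ext^i(k, M)` are `1` in degree `d`
and `0` elsewhere. -/
def IsCanonicalModule (d : ℕ) (M : Type u) [AddCommGroup M] [Module R M] : Prop :=
  Module.Finite R M ∧
    ∀ m : Ideal R, m.IsMaximal → ∀ i : ℕ,
      (i = d → Nonempty ((extMod R i (R ⧸ m) M) ≃ₗ[R] (R ⧸ m))) ∧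
      (i ≠ d → Subsingleton (extMod R i (R ⧸ m) M))

/-- A Gorenstein local ring: a Cohen–Macaulay local ring which is its own canonical module. -/
def IsGorensteinLocalRing : Prop :=
  IsCMLocalRing R ∧ ∀ d : ℕ, ringKrullDim R = (d : WithBot ℕ∞) → IsCanonicalModule R d R

/-- The Cohen–Macaulay type of `R` (of dimension `d`) equals `r`:
`r = dim_k Ext^d(k, R)`. -/
def HasCMTypeEq (d r : ℕ) : Prop :=
  ∀ m : Ideal R, m.IsMaximal → mLength R (extMod R d (R ⧸ m) R) = r

/-- `e` gives the Hilbert coefficients of the ideal `J` in the `d`-dimensional local ring `R`: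
for all large `n`, `ℓ(R/J^{n+1}) = Σ_{i=0}^d (-1)^i e_i binom(n+d-i, d-i)`. -/
def HasHilbertCoeffs (J : Ideal R) (d : ℕ) (e : ℕ → ℤ) : Prop :=
  ∃ N : ℕ, ∀ n ≥ N, (mLength R (R ⧸ J ^ (n + 1)) : ℤ) =
    ∑ i ∈ Finset.range (d + 1), (-1) ^ i * e i * ((n + d - i).choose (d - i) : ℤ)

/-- The multiplicity `e_a^0(M)` of the `s`-dimensional module `M` with respect to `a` is `e`:
`s! ℓ(M/a^{n+1}M)/n^s → e`. -/
def HasMultiplicity (a : Ideal R) (M : Type v) [AddCommGroup M] [Module R M]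
    (s : ℕ) (e : ℕ) : Prop :=
  Filter.Tendsto
    (fun n : ℕ => (Nat.factorial s : ℝ) *
      (mLength R (M ⧸ (a ^ (n + 1) • (⊤ : Submodule R M))) : ℝ) / (n : ℝ) ^ s)
    Filter.atTop (nhds (e : ℝ))

/-- `M` is free as a module over `R/a` (equivalently, `R`-linearly isomorphic to a direct sum
of copies of `R/a`). -/
def IsFreeOver (a : Ideal R) (M : Type u) [AddCommGroup M] [Module R M] : Prop :=
  ∃ ι : Type u, Nonempty (M ≃ₗ[R] (ι →₀ R ⧸ a))

/-- `M` is an Ulrich module with respect to the `m`-primary ideal `a`: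
`M` is Cohen–Macaulay, `e_a^0(M) = ℓ(M/aM)`, and `M/aM` is `R/a`-free. -/
def IsUlrichModule (a : Ideal R) (M : Type u) [AddCommGroup M] [Module R M] : Prop :=
  IsCMModule R M ∧
    (∃ s : ℕ, moduleDimIs R M s ∧
      HasMultiplicity R a M s (mLength R (M ⧸ (a • (⊤ : Submodule R M))))) ∧
    IsFreeOver R a (M ⧸ (a • (⊤ : Submodule R M)))

/-- `R` is generalized Gorenstein with respect to `a`, witnessed by the canonical module `M`:
there is an exact sequence `0 → R → M → C → 0` with `C` Ulrich with respect to `a` and with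
`R/a → M/aM` injective. -/
def IsGGLWith (a : Ideal R) (M : Type u) [AddCommGroup M] [Module R M] : Prop :=
  ∃ φ : R →ₗ[R] M, Function.Injective φ ∧
    IsUlrichModule R a (M ⧸ LinearMap.range φ) ∧
    ∀ r : R, φ r ∈ a • (⊤ : Submodule R M) → r ∈ a

/-- `f` is a system of parameters of `R` (of dimension `d`): it generates an ideal whose
radical is the maximal ideal. -/
def IsParameterSystem (d : ℕ) (f : Fin d → R) : Prop :=
  ringKrullDim R = (d : WithBot ℕ∞) ∧
    ∀ m : Ideal R, m.IsMaximal → (Ideal.span (Set.range f)).radical = m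

/-- `a` is an `m`-primary ideal of the local ring `R`. -/
def IsMPrimaryIdeal (a : Ideal R) : Prop :=
  a ≠ ⊤ ∧ ∀ m : Ideal R, m.IsMaximal → a.radical = m

/-- The colon submodule `Y : X` inside a commutative `R`-algebra `A`. -/
def resid (A : Type v) [CommRing A] [Algebra R A] (Y X : Submodule R A) : Submodule R A where
  carrier := {y | ∀ x ∈ X, y * x ∈ Y}
  add_mem' := by
    intro a b ha hb x hx
    simpa [add_mul] using Y.add_mem (ha x hx) (hb x hx)
  zero_mem' := by intro x hx; simp
  smul_mem' := by
    intro c y hy x hx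
    rw [smul_mul_assoc]
    exact Submodule.smul_mem Y c (hy x hx)

/-- The fractional ideal `I/a = {x/a : x ∈ I}` inside the total quotient ring of `R`
(for `a` a nonzerodivisor belonging to a reduction of `I`). -/
noncomputable def fracByDiv (I : Ideal R) (a : R) : Submodule R (FractionRing R) :=
  Submodule.comap ((Algebra.lmul R (FractionRing R)) (algebraMap R (FractionRing R) a))
    (Submodule.map (Algebra.linearMap R (FractionRing R)) I)

/-!
If `f₁, …, f_d` is a weakly regular sequence generating `Q`, then a relation `∑ fᵢ yᵢ ∈ Q²`
forces every `yᵢ ∈ Q`. By induction on `d`: write `Q = Q' + (a)` with `a = f_d`, split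
`∑ fᵢ yᵢ = q + a t` with `q ∈ Q'²`, `t ∈ Q`; as `a` is a nonzerodivisor modulo `Q'`, this gives
`y_d - t = ∑ zᵢ fᵢ ∈ Q'`, and the relation `∑_{i<d} fᵢ (yᵢ + a zᵢ) = q` lets the induction
hypothesis conclude.

Consequently, if `x = ∑ fᵢ cᵢ` satisfies `x a ⊆ Q²`, then each `cᵢ a ⊆ Q`, i.e.
`Q ∩ (Q² : a) ⊆ Q (Q : a)`. With `L = Q : a`, the hypothesis `aL ⊆ aQ` gives `L² a ⊆ Q²`, so
`L² ⊆ Q ∩ (Q² : a) ⊆ QL`; the reverse inclusion holds because `Q ⊆ L`.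
-/

section

variable {R}

theorem Ideal.sup_sq_le (I J : Ideal R) : (I ⊔ J) ^ 2 ≤ I ^ 2 ⊔ J * (I ⊔ J) := by
  rw [sq, sup_mul, mul_sup, ← sq, mul_comm I J]
  exact sup_le (sup_le le_sup_left (le_sup_of_le_right (Ideal.mul_mono_right le_sup_left)))
    le_sup_right

theorem Ideal.ofList_ofFn {d : ℕ} (f : Fin d → R) :
    Ideal.ofList (List.ofFn f) = Ideal.span (Set.range f) := by
  simp only [Ideal.ofList, List.mem_ofFn]
  rfl

theorem List.ofFn_snoc {α : Type*} {d : ℕ} (f : Fin d → α) (a : α) :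
    List.ofFn (Fin.snoc f a : Fin (d + 1) → α) = List.ofFn f ++ [a] := by
  rw [List.ofFn_succ_last]
  simp

theorem RingTheory.Sequence.IsWeaklyRegular.mem_of_mul_mem_of_append {d : ℕ} {f : Fin d → R}
    {a x : R} (h : IsWeaklyRegular R (List.ofFn f ++ [a]))
    (hx : a * x ∈ Ideal.span (Set.range f)) : x ∈ Ideal.span (Set.range f) := by
  rw [isWeaklyRegular_append_iff, isWeaklyRegular_singleton_iff, Ideal.ofList_ofFn] at h
  simpa using mem_of_isSMulRegular_quotient_of_smul_mem h.2 (by simpa using hx)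

theorem Ideal.sum_mul_mem_span_range {d : ℕ} (f y : Fin d → R) :
    ∑ i, f i * y i ∈ Ideal.span (Set.range f) :=
  Ideal.sum_mem _ fun i _ ↦ Ideal.mul_mem_right _ _ (Ideal.subset_span ⟨i, rfl⟩)

theorem RingTheory.Sequence.IsWeaklyRegular.mem_span_range_of_sum_mul_mem_sq {d : ℕ}
    {f : Fin d → R} (hf : IsWeaklyRegular R (List.ofFn f)) {y : Fin d → R}
    (hy : ∑ i, f i * y i ∈ Ideal.span (Set.range f) ^ 2) (i : Fin d) :
    y i ∈ Ideal.span (Set.range f) := by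
  induction d with
  | zero => exact i.elim0
  | succ d ih =>
    cases f using Fin.snocCases with
    | snoc f a =>
    rw [List.ofFn_snoc] at hf
    rw [Fin.range_snoc, Ideal.span_insert, sup_comm] at hy ⊢
    set Q := Ideal.span (Set.range f)
    obtain ⟨q, hq, _, hat, hqt⟩ := Submodule.mem_sup.1 (Ideal.sup_sq_le _ _ hy)
    obtain ⟨t, ht, rfl⟩ := Ideal.mem_span_singleton_mul.1 hat
    simp only [Fin.sum_univ_castSucc, Fin.snoc_castSucc, Fin.snoc_last] at hqt
    set s := ∑ j : Fin d, f j * y j.castSucc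
    have hlast : y (Fin.last d) - t ∈ Q := by
      have : a * (y (Fin.last d) - t) ∈ Q := by
        rw [show a * (y (Fin.last d) - t) = q - s by linear_combination hqt.symm]
        exact Q.sub_mem (Ideal.pow_le_self two_ne_zero hq) (Ideal.sum_mul_mem_span_range _ _)
      exact hf.mem_of_mul_mem_of_append this
    obtain ⟨z, hz⟩ := (Submodule.mem_span_range_iff_exists_fun R).1 hlast
    have hinit (j : Fin d) : y j.castSucc + a * z j ∈ Q := by
      have hf' := ((isWeaklyRegular_append_iff _ _ _).1 hf).1
      refine ih (y := fun j ↦ y j.castSucc + a * z j) hf' ?_ j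
      convert hq using 1
      calc ∑ j, f j * (y j.castSucc + a * z j) = s + a * ∑ j, z j • f j := by
            simp only [s, mul_add, Finset.sum_add_distrib, Finset.mul_sum, smul_eq_mul]
            exact congrArg _ (Finset.sum_congr rfl fun _ _ ↦ by ring)
        _ = q := by rw [hz]; linear_combination -hqt
    induction i using Fin.lastCases with
    | last => simpa using Ideal.add_mem _ (Ideal.mem_sup_left hlast) ht
    | cast j =>
      have haz : a * z j ∈ Ideal.span {a} :=
        Ideal.mul_mem_right _ _ (Ideal.mem_span_singleton_self a)
      simpa using Ideal.sub_mem _ (Ideal.mem_sup_left (hinit j)) (Ideal.mem_sup_right haz)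

theorem Ideal.le_colon_iff_mul_le {I J K : Ideal R} : I ≤ K.colon J ↔ I * J ≤ K :=
  ⟨fun h ↦ Ideal.mul_le.2 fun _ hx _ hy ↦ Submodule.mem_colon.1 (h hx) _ hy,
    fun h _ hx ↦ Submodule.mem_colon.2 fun _ hy ↦ h (Ideal.mul_mem_mul hx hy)⟩

theorem RingTheory.Sequence.IsWeaklyRegular.inf_colon_sq_le_mul_colon {d : ℕ} {f : Fin d → R}
    (hf : IsWeaklyRegular R (List.ofFn f)) (a : Ideal R) :
    Ideal.span (Set.range f) ⊓ (Ideal.span (Set.range f) ^ 2).colon a ≤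
      Ideal.span (Set.range f) * (Ideal.span (Set.range f)).colon a := by
  rintro x ⟨hxQ, hxa⟩
  obtain ⟨c, rfl⟩ := (Submodule.mem_span_range_iff_exists_fun R).1 hxQ
  have hc (i : Fin d) : c i ∈ (Ideal.span (Set.range f)).colon a := by
    refine Submodule.mem_colon.2 fun α hα ↦
      hf.mem_span_range_of_sum_mul_mem_sq (y := fun i ↦ c i • α) ?_ i
    simpa [Finset.mul_sum, mul_comm, mul_left_comm] using Submodule.mem_colon.1 hxa α hα
  refine Ideal.sum_mem _ fun i _ ↦ ?_
  rw [smul_eq_mul, mul_comm (c i)]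
  exact Ideal.mul_mem_mul (Ideal.subset_span ⟨i, rfl⟩) (hc i)

end

theorem stmt11_general (R : Type u) [CommRing R]
    (d : ℕ) (f : Fin d → R)
    (hreg : RingTheory.Sequence.IsRegular R (List.ofFn f))
    (Q : Ideal R) (hQ : Q = Ideal.span (Set.range f))
    (a : Ideal R) (L : Ideal R) (hL : L = Submodule.colon Q a)
    (h1 : a * L ≤ a * Q) (h2 : L * L ≤ Q) :
    L * L = Q * L := by
  have hQL : Q ≤ L := hL ▸ Ideal.le_colon
  have hLLa : L * L * a ≤ Q ^ 2 := calc
    L * L * a = a * L * L := by ring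
    _ ≤ a * Q * L := Ideal.mul_mono_left h1
    _ = a * L * Q := by ring
    _ ≤ a * Q * Q := Ideal.mul_mono_left h1
    _ ≤ Q ^ 2 := sq Q ▸ Ideal.mul_mono_left Ideal.mul_le_right
  refine le_antisymm ?_ (Ideal.mul_mono_left hQL)
  calc L * L ≤ Q ⊓ (Q ^ 2).colon a := le_inf h2 (Ideal.le_colon_iff_mul_le.2 hLLa)
    _ ≤ Q * Q.colon a := hQ ▸ hreg.toIsWeaklyRegular.inf_colon_sq_le_mul_colon a
    _ = Q * L := by rw [hL]

theorem stmt11 (R : Type u) [CommRing R] [IsNoetherianRing R] [IsLocalRing R]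
    (d : ℕ) (f : Fin d → R)
    (hreg : RingTheory.Sequence.IsRegular R (List.ofFn f))
    (Q : Ideal R) (hQ : Q = Ideal.span (Set.range f))
    (a : Ideal R) (L : Ideal R) (hL : L = Submodule.colon Q a)
    (h1 : a * L ≤ a * Q) (h2 : L * L ≤ Q) :
    L * L = Q * L :=
  stmt11_general R d f hreg Q hQ a L hL h1 h2

end
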